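/- arXiv:2006.02882 — 3 statements merged into one kernel-verified Lean document; each statement's English description precedes it below -/
import Mathlib

section
/- Let x = ⟨n_1, n_2, n_3, ...⟩ ∈ (0,1] and let T be the map T(x) = 2^i x - 1 for x ∈ (1/2^i, 1/2^{i-1}]. Then for all k ≥ 1, T^{k-1}(x) ∈ (1/2^i, 1/2^{i-1}] if and only if n_k = i. -/
/-!
Writing `x = ⟨n₀, n₁, …⟩` as `x = 2^{-n₀} (1 + ⟨n₁, n₂, …⟩)` and using `0 < ⟨n₁, n₂, …⟩ ≤ 1`
places `x` in `(2^{-n₀}, 2^{-(n₀-1)}]`. Hence the branch of `T` applied to `x` is the one with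
`i = n₀`, and it maps `x` to `⟨n₁, n₂, …⟩`: `T` acts as the shift on digit sequences.
-/

noncomputable def repVal (n : ℕ → ℕ+) : ℝ :=
  ∑' k : ℕ, ((2:ℝ)⁻¹) ^ (∑ j ∈ Finset.range (k + 1), (n j : ℕ))

open Set

lemma inv_two_pow_digitSum_le (n : ℕ → ℕ+) (k : ℕ) :
    (2⁻¹ : ℝ) ^ (∑ j ∈ Finset.range (k + 1), (n j : ℕ)) ≤ 2⁻¹ * 2⁻¹ ^ k := by
  have hsum : k + 1 ≤ ∑ j ∈ Finset.range (k + 1), (n j : ℕ) := by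
    simpa using
      Finset.card_nsmul_le_sum (Finset.range (k + 1)) (fun j => (n j : ℕ)) 1 fun j _ => (n j).pos
  calc (2⁻¹ : ℝ) ^ (∑ j ∈ Finset.range (k + 1), (n j : ℕ))
      ≤ 2⁻¹ ^ (k + 1) := pow_le_pow_of_le_one (by norm_num) (by norm_num) hsum
    _ = 2⁻¹ * 2⁻¹ ^ k := pow_succ' _ _

lemma summable_inv_two_mul_inv_two_pow :
    Summable fun k : ℕ => (2⁻¹ : ℝ) * 2⁻¹ ^ k :=
  (summable_geometric_of_lt_one (by norm_num) (by norm_num)).mul_left _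

lemma summable_repVal (n : ℕ → ℕ+) :
    Summable fun k : ℕ => (2⁻¹ : ℝ) ^ (∑ j ∈ Finset.range (k + 1), (n j : ℕ)) :=
  summable_inv_two_mul_inv_two_pow.of_nonneg_of_le (fun _ => by positivity)
    (inv_two_pow_digitSum_le n)

lemma repVal_pos (n : ℕ → ℕ+) : 0 < repVal n :=
  (summable_repVal n).tsum_pos (fun _ => by positivity) 0 (by positivity)

lemma repVal_le_one (n : ℕ → ℕ+) : repVal n ≤ 1 :=
  calc repVal n ≤ ∑' k : ℕ, (2⁻¹ : ℝ) * 2⁻¹ ^ k :=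
        (summable_repVal n).tsum_le_tsum (inv_two_pow_digitSum_le n)
          summable_inv_two_mul_inv_two_pow
    _ = 1 := by rw [tsum_mul_left, tsum_geometric_inv_two]; norm_num

lemma repVal_eq_head_mul_one_add_tail (n : ℕ → ℕ+) :
    repVal n = 2⁻¹ ^ (n 0 : ℕ) * (1 + repVal fun k => n (k + 1)) := by
  have hterm : ∀ k : ℕ, (2⁻¹ : ℝ) ^ (∑ j ∈ Finset.range (k + 1 + 1), (n j : ℕ)) =
      2⁻¹ ^ (n 0 : ℕ) * 2⁻¹ ^ (∑ j ∈ Finset.range (k + 1), (n (j + 1) : ℕ)) := fun k => by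
    rw [Finset.sum_range_succ', pow_add, mul_comm]
  rw [repVal, (summable_repVal n).tsum_eq_zero_add, tsum_congr hterm, tsum_mul_left, repVal]
  simp [mul_add]

lemma inv_two_pow_succ_mul_one_add_mem_Ioc {y : ℝ} (hy₀ : 0 < y) (hy₁ : y ≤ 1) (m : ℕ) :
    2⁻¹ ^ (m + 1) * (1 + y) ∈ Ioc ((2 ^ (m + 1) : ℝ)⁻¹) ((2 ^ m : ℝ)⁻¹) := by
  have hpos : (0 : ℝ) < 2⁻¹ ^ m := by positivity
  rw [← inv_pow, ← inv_pow, pow_succ]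
  constructor <;> nlinarith

lemma eq_of_mem_Ioc_inv_two_pow {x : ℝ} {i m : ℕ}
    (hi : x ∈ Ioc ((2 ^ (i + 1) : ℝ)⁻¹) ((2 ^ i : ℝ)⁻¹))
    (hm : x ∈ Ioc ((2 ^ (m + 1) : ℝ)⁻¹) ((2 ^ m : ℝ)⁻¹)) : i = m := by
  have hlt : ∀ {a b : ℕ}, ((2 : ℝ) ^ a)⁻¹ < (2 ^ b)⁻¹ → b < a := fun h =>
    (pow_lt_pow_iff_right₀ one_lt_two).1 ((inv_lt_inv₀ (by positivity) (by positivity)).1 h)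
  have him : m < i + 1 := hlt (hi.1.trans_le hm.2)
  have hmi : i < m + 1 := hlt (hm.1.trans_le hi.2)
  omega

lemma repVal_mem_Ioc_of_head_eq {n : ℕ → ℕ+} {m : ℕ} (hm : (n 0 : ℕ) = m + 1) :
    repVal n ∈ Ioc ((2 ^ (m + 1) : ℝ)⁻¹) ((2 ^ m : ℝ)⁻¹) := by
  rw [repVal_eq_head_mul_one_add_tail, hm]
  exact inv_two_pow_succ_mul_one_add_mem_Ioc (repVal_pos _) (repVal_le_one _) m

lemma repVal_mem_Ioc_iff (n : ℕ → ℕ+) (i : ℕ) :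
    repVal n ∈ Ioc ((2 ^ (i + 1) : ℝ)⁻¹) ((2 ^ i : ℝ)⁻¹) ↔ (n 0 : ℕ) = i + 1 := by
  refine ⟨fun h => ?_, repVal_mem_Ioc_of_head_eq⟩
  obtain ⟨m, hm⟩ := Nat.exists_eq_add_one_of_ne_zero (n 0).ne_zero
  rwa [eq_of_mem_Ioc_inv_two_pow h (repVal_mem_Ioc_of_head_eq hm)]

section Shift

variable {T : ℝ → ℝ}
  (hT : ∀ i : ℕ, ∀ x ∈ Ioc ((2 ^ (i + 1) : ℝ)⁻¹) ((2 ^ i : ℝ)⁻¹), T x = 2 ^ (i + 1) * x - 1)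
include hT

lemma apply_repVal (n : ℕ → ℕ+) : T (repVal n) = repVal fun k => n (k + 1) := by
  obtain ⟨m, hm⟩ := Nat.exists_eq_add_one_of_ne_zero (n 0).ne_zero
  rw [hT m _ (repVal_mem_Ioc_of_head_eq hm), repVal_eq_head_mul_one_add_tail, hm, inv_pow,
    mul_inv_cancel_left₀ (by positivity)]
  ring

lemma iterate_repVal (n : ℕ → ℕ+) (k : ℕ) : T^[k] (repVal n) = repVal fun j => n (j + k) := by
  induction k with
  | zero => rfl
  | succ k ih =>
    rw [Function.iterate_succ_apply', ih, apply_repVal hT]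
    simp only [add_assoc, add_comm 1 k]

end Shift

/-- Digits and iterates are 0-indexed: `n k` and `T^[k]` are the paper's `n_{k+1}` and `T^k`. -/
theorem iterate_mem_interval_iff_digit (T : ℝ → ℝ)
    (hT : ∀ i : ℕ, ∀ x ∈ Set.Ioc (((2:ℝ) ^ (i + 1))⁻¹) (((2:ℝ) ^ i)⁻¹),
      T x = 2 ^ (i + 1) * x - 1) :
    ∀ n : ℕ → ℕ+, ∀ k : ℕ, ∀ i : ℕ,
      (T^[k] (repVal n) ∈ Set.Ioc (((2:ℝ) ^ (i + 1))⁻¹) (((2:ℝ) ^ i)⁻¹)) ↔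
        (n k : ℕ) = i + 1 := by
  intro n k i
  rw [iterate_repVal hT, repVal_mem_Ioc_iff, zero_add]
end

section
/- Lebesgue measure on (0,1] is ergodic with respect to the map T defined by T(x) = 2^i x - 1 for x ∈ (1/2^i, 1/2^{i-1}]: every Borel set B ⊆ (0,1] with T^{-1}(B) = B (up to measure zero) has Lebesgue measure 0 or 1. -/
/-!
Let `F t = vol (B ∩ (0, t])`. On the branch interval `(2^-(i+1), 2^-i]` the map is the affine
bijection `x ↦ 2^(i+1) x - 1` onto `(0, 1]`, so invariance of `B` turns into the self-similarity
`F t = F (2^-(i+1)) + 2^-(i+1) F (2^(i+1) t - 1)`. Evaluating at the endpoints gives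
`F (2^-k) = vol B · 2^-k`, and then the error `F t - vol B · t` is at most half the error at the
image of `t` under the branch map; being bounded, it vanishes. Hence `vol` restricted to `B` is
`vol B` times `vol` restricted to `(0, 1]`, and evaluating at `B` gives `vol B = (vol B)^2`.
-/

open MeasureTheory Set
open scoped symmDiff

def dyadicInterval (i : ℕ) : Set ℝ := Ioc ((2 ^ (i + 1))⁻¹) ((2 ^ i)⁻¹)

def dyadicBranch (i : ℕ) (x : ℝ) : ℝ := 2 ^ (i + 1) * x - 1

lemma dyadicBranch_mem_Ioc_iff {i : ℕ} {x : ℝ} :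
    dyadicBranch i x ∈ Ioc (0 : ℝ) 1 ↔ x ∈ dyadicInterval i := by
  have h : (0 : ℝ) < 2 ^ i := by positivity
  rw [dyadicBranch, dyadicInterval, mem_Ioc, mem_Ioc, pow_succ, inv_eq_one_div, inv_eq_one_div,
    div_lt_iff₀ (by positivity), le_div_iff₀ h]
  constructor <;> rintro ⟨h1, h2⟩ <;> constructor <;> nlinarith

lemma dyadicInterval_subset_Ioc (i : ℕ) : dyadicInterval i ⊆ Ioc 0 1 := by
  rintro x ⟨h0, h1⟩
  exact ⟨lt_trans (by positivity) h0, h1.trans (inv_le_one_of_one_le₀ (one_le_pow₀ one_le_two))⟩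

lemma exists_mem_dyadicInterval {x : ℝ} (hx : x ∈ Ioc (0 : ℝ) 1) : ∃ i, x ∈ dyadicInterval i := by
  have h : ∃ n : ℕ, ((2 : ℝ) ^ n)⁻¹ < x := by
    simpa [inv_pow] using exists_pow_lt_of_lt_one hx.1 (by norm_num : (2 : ℝ)⁻¹ < 1)
  obtain ⟨i, hi⟩ : ∃ i, Nat.find h = i + 1 :=
    Nat.exists_eq_succ_of_ne_zero fun h0 => by
      have h1 := Nat.find_spec h
      rw [h0, pow_zero, inv_one] at h1
      exact absurd hx.2 h1.not_ge
  have hi_spec := Nat.find_spec h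
  rw [hi] at hi_spec
  exact ⟨i, hi_spec, not_lt.mp (Nat.find_min h (by omega))⟩

lemma dyadicBranch_strictMono (i : ℕ) : StrictMono (dyadicBranch i) := fun x y h => by
  unfold dyadicBranch; gcongr

lemma measureReal_preimage_dyadicBranch (i : ℕ) (S : Set ℝ) :
    volume.real (dyadicBranch i ⁻¹' S) = (2 ^ (i + 1))⁻¹ * volume.real S := by
  have h : dyadicBranch i ⁻¹' S = (2 ^ (i + 1) * ·) ⁻¹' ((· + (-1)) ⁻¹' S) := by
    ext x; simp [dyadicBranch, sub_eq_add_neg]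
  rw [h, measureReal_def, Real.volume_preimage_mul_left (by positivity), measure_preimage_add_right,
    ENNReal.toReal_mul, ENNReal.toReal_ofReal (abs_nonneg _), abs_of_pos (by positivity),
    measureReal_def]

lemma preimage_dyadicBranch_ae_eq {T : ℝ → ℝ}
    (hT : ∀ i, EqOn T (dyadicBranch i) (dyadicInterval i)) {B : Set ℝ} (hB : B ⊆ Ioc 0 1)
    (hinv : (T ⁻¹' B ∩ Ioc 0 1 : Set ℝ) =ᵐ[volume] B) (i : ℕ) :
    (dyadicBranch i ⁻¹' B : Set ℝ) =ᵐ[volume] (B ∩ dyadicInterval i : Set ℝ) := by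
  have hset : T ⁻¹' B ∩ Ioc 0 1 ∩ dyadicInterval i = dyadicBranch i ⁻¹' B := by
    ext x
    simp only [mem_inter_iff, mem_preimage]
    constructor
    · rintro ⟨⟨hx, -⟩, hxi⟩
      rwa [← hT i hxi]
    · intro hx
      have hxi := dyadicBranch_mem_Ioc_iff.mp (hB hx)
      exact ⟨⟨by rwa [hT i hxi], dyadicInterval_subset_Ioc i hxi⟩, hxi⟩
  rw [← hset]
  exact ae_eq_set_inter hinv (ae_eq_refl _)

lemma measureReal_inter_Iic_of_mem_dyadicInterval {B : Set ℝ} (hBm : MeasurableSet B)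
    (hB : B ⊆ Ioc 0 1) {i : ℕ}
    (hbranch : (dyadicBranch i ⁻¹' B : Set ℝ) =ᵐ[volume] (B ∩ dyadicInterval i : Set ℝ))
    {t : ℝ} (ht : t ∈ dyadicInterval i) :
    volume.real (B ∩ Iic t) = volume.real (B ∩ Iic (2 ^ (i + 1))⁻¹)
      + (2 ^ (i + 1))⁻¹ * volume.real (B ∩ Iic (dyadicBranch i t)) := by
  have hfin : ∀ s ⊆ B, volume s ≠ ⊤ := fun s hs =>
    measure_ne_top_of_subset (hs.trans hB) measure_Ioc_lt_top.ne
  have hsplit : B ∩ Iic t = B ∩ Iic (2 ^ (i + 1))⁻¹ ∪ B ∩ Ioc (2 ^ (i + 1))⁻¹ t := by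
    rw [← inter_union_distrib_left, Iic_union_Ioc_eq_Iic ht.1.le]
  have hupper : (B ∩ Ioc (2 ^ (i + 1))⁻¹ t : Set ℝ)
      =ᵐ[volume] (dyadicBranch i ⁻¹' (B ∩ Iic (dyadicBranch i t)) : Set ℝ) := by
    have hIic : dyadicBranch i ⁻¹' Iic (dyadicBranch i t) = Iic t :=
      ext fun x => (dyadicBranch_strictMono i).le_iff_le
    have hlower : B ∩ Ioc (2 ^ (i + 1))⁻¹ t = B ∩ dyadicInterval i ∩ Iic t := by
      rw [inter_assoc, dyadicInterval, Ioc_inter_Iic, min_eq_right ht.2]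
    rw [preimage_inter, hIic, hlower]
    exact ae_eq_set_inter hbranch.symm (ae_eq_refl _)
  have hdisj : Disjoint (B ∩ Iic (2 ^ (i + 1))⁻¹) (B ∩ Ioc (2 ^ (i + 1))⁻¹ t) :=
    (Iic_disjoint_Ioc le_rfl).mono inter_subset_right inter_subset_right
  rw [hsplit, measureReal_union hdisj (hBm.inter measurableSet_Ioc) (hfin _ inter_subset_left)
    (hfin _ inter_subset_left), measureReal_congr hupper, measureReal_preimage_dyadicBranch]

lemma eqOn_zero_of_abs_le_of_two_mul_abs_le {α : Type*} {S : Set α} {g : α → ℝ} {C : ℝ}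
    (hC : ∀ x ∈ S, |g x| ≤ C) (hg : ∀ x ∈ S, ∃ y ∈ S, 2 * |g x| ≤ |g y|) : EqOn g 0 S := by
  have hpow : ∀ n : ℕ, ∀ x ∈ S, 2 ^ n * |g x| ≤ C := by
    intro n
    induction n with
    | zero => simpa using hC
    | succ n ih =>
      intro x hx
      obtain ⟨y, hy, hxy⟩ := hg x hx
      calc 2 ^ (n + 1) * |g x| = 2 ^ n * (2 * |g x|) := by ring
        _ ≤ 2 ^ n * |g y| := by gcongr
        _ ≤ C := ih y hy
  intro x hx
  by_contra hne
  have hpos : 0 < |g x| := abs_pos.mpr hne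
  obtain ⟨n, hn⟩ := pow_unbounded_of_one_lt (C / |g x|) one_lt_two
  rw [div_lt_iff₀ hpos] at hn
  linarith [hpow n x hx]

lemma eqOn_mul_of_dyadic_selfSimilar {F : ℝ → ℝ} {b C : ℝ} (hC : ∀ t ∈ Ioc 0 1, |F t| ≤ C)
    (h1 : F 1 = b) (hF : ∀ i, ∀ t ∈ dyadicInterval i,
      F t = F (2 ^ (i + 1))⁻¹ + (2 ^ (i + 1))⁻¹ * F (dyadicBranch i t)) :
    EqOn F (b * ·) (Ioc 0 1) := by
  set G : ℝ → ℝ := fun t => F t - b * t with hGdef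
  have hG : ∀ i, ∀ t ∈ dyadicInterval i,
      G t = G (2 ^ (i + 1))⁻¹ + (2 ^ (i + 1))⁻¹ * G (dyadicBranch i t) := by
    intro i t ht
    simp only [hGdef, hF i t ht, dyadicBranch]
    field_simp
    ring
  have hG1 : G 1 = 0 := by simp [hGdef, h1]
  have hdyadic : ∀ k : ℕ, G (2 ^ k)⁻¹ = 0 := by
    intro k
    induction k with
    | zero => simpa using hG1
    | succ k ih =>
      have hk : ((2 : ℝ) ^ k)⁻¹ ∈ dyadicInterval k :=
        ⟨inv_strictAnti₀ (by positivity) (pow_lt_pow_right₀ one_lt_two k.lt_succ_self), le_rfl⟩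
      have hk1 : dyadicBranch k (2 ^ k)⁻¹ = 1 := by
        simp only [dyadicBranch, pow_succ]
        field_simp
        norm_num
      have hsplit := hG k _ hk
      rw [ih, hk1, hG1] at hsplit
      linarith
  have hdouble : ∀ t ∈ Ioc 0 1, ∃ s ∈ Ioc 0 1, 2 * |G t| ≤ |G s| := by
    intro t ht
    obtain ⟨i, hi⟩ := exists_mem_dyadicInterval ht
    refine ⟨dyadicBranch i t, dyadicBranch_mem_Ioc_iff.mpr hi, ?_⟩
    have h2 : 2 * ((2 : ℝ) ^ (i + 1))⁻¹ ≤ 1 := by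
      rw [pow_succ', mul_inv, ← mul_assoc, mul_inv_cancel₀ two_ne_zero, one_mul]
      exact inv_le_one_of_one_le₀ (one_le_pow₀ one_le_two)
    rw [hG i t hi, hdyadic (i + 1), zero_add, abs_mul, abs_of_pos (by positivity), ← mul_assoc]
    exact mul_le_of_le_one_left (abs_nonneg _) h2
  have hbound : ∀ t ∈ Ioc 0 1, |G t| ≤ C + |b| := by
    intro t ht
    calc |G t| ≤ |F t| + |b * t| := abs_sub _ _
      _ ≤ C + |b| := by
        rw [abs_mul, abs_of_pos ht.1]
        gcongr
        · exact hC t ht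
        · exact mul_le_of_le_one_right (abs_nonneg b) ht.2
  intro t ht
  simpa [hGdef, sub_eq_zero] using eqOn_zero_of_abs_le_of_two_mul_abs_le hbound hdouble ht

lemma volume_eq_zero_or_one_of_measureReal_inter_Iic {B : Set ℝ} (hBm : MeasurableSet B)
    (hB : B ⊆ Ioc 0 1) (hlin : ∀ t ∈ Ioc 0 1, volume.real (B ∩ Iic t) = volume.real B * t) :
    volume B = 0 ∨ volume B = 1 := by
  have hBfin : volume B ≠ ⊤ := measure_ne_top_of_subset hB measure_Ioc_lt_top.ne
  have : IsFiniteMeasure (volume.restrict B) := isFiniteMeasure_restrict.mpr hBfin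
  have hrestrict : volume.restrict B = volume B • volume.restrict (Ioc 0 1) := by
    refine Measure.ext_of_Iic _ _ fun t => ?_
    rw [Measure.restrict_apply measurableSet_Iic, Measure.smul_apply,
      Measure.restrict_apply measurableSet_Iic, smul_eq_mul]
    rcases le_or_gt t 0 with ht | ht
    · have hempty : Iic t ∩ Ioc 0 1 = ∅ :=
        eq_empty_of_forall_notMem fun x hx => (hx.1.trans ht).not_gt hx.2.1
      have hBempty : Iic t ∩ B = ∅ := subset_empty_iff.mp (hempty ▸ inter_subset_inter_right _ hB)
      simp [hempty, hBempty]
    · have hs : min t 1 ∈ Ioc 0 1 := ⟨lt_min ht one_pos, min_le_right _ _⟩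
      have hBs : Iic t ∩ B = B ∩ Iic (min t 1) := by
        rw [inter_comm, ← Iic_inter_Iic, inter_comm (Iic t), ← inter_assoc,
          inter_eq_left.mpr (hB.trans Ioc_subset_Iic_self)]
      rw [hBs, inter_comm (Iic t), Ioc_inter_Iic, min_comm 1 t, Real.volume_Ioc, sub_zero,
        ← ofReal_measureReal, hlin _ hs, ENNReal.ofReal_mul measureReal_nonneg, ofReal_measureReal]
  have hidem : IsIdempotentElem (volume.real B) := by
    have h := congrArg (· B) hrestrict
    simp only [Measure.restrict_apply hBm, inter_self, Measure.smul_apply, smul_eq_mul,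
      inter_eq_left.mpr hB] at h
    rw [IsIdempotentElem, measureReal_def, ← ENNReal.toReal_mul, ← h]
  rcases IsIdempotentElem.iff_eq_zero_or_one.mp hidem with h | h
  · exact Or.inl ((measureReal_eq_zero_iff hBfin).mp h)
  · exact Or.inr ((ENNReal.toReal_eq_one_iff _).mp h)

/-- Lebesgue measure on `(0,1]` is ergodic for `T x = 2^i x - 1` on `(1/2^i, 1/2^{i-1}]`:
any Borel `B ⊆ (0,1]` that is invariant up to measure zero has measure `0` or `1`. -/
theorem T_ergodic (T : ℝ → ℝ)
    (hT : ∀ i : ℕ, ∀ x ∈ Set.Ioc (((2:ℝ) ^ (i + 1))⁻¹) (((2:ℝ) ^ i)⁻¹),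
      T x = 2 ^ (i + 1) * x - 1) :
    ∀ B ⊆ Set.Ioc (0:ℝ) 1, MeasurableSet B →
      volume ((T ⁻¹' B ∩ Set.Ioc (0:ℝ) 1) ∆ B) = 0 →
      volume B = 0 ∨ volume B = 1 := by
  intro B hB hBm hinv
  have hbranch := preimage_dyadicBranch_ae_eq (fun i x hx => hT i x hx) hB
    (measure_symmDiff_eq_zero_iff.mp hinv)
  have hF1 : volume.real (B ∩ Iic 1) = volume.real B := by
    rw [inter_eq_left.mpr (hB.trans Ioc_subset_Iic_self)]
  have hbound : ∀ t ∈ Ioc (0 : ℝ) 1, |volume.real (B ∩ Iic t)| ≤ volume.real B := fun t _ => by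
    rw [abs_of_nonneg measureReal_nonneg]
    exact measureReal_mono inter_subset_left (measure_ne_top_of_subset hB measure_Ioc_lt_top.ne)
  exact volume_eq_zero_or_one_of_measureReal_inter_Iic hBm hB
    (eqOn_mul_of_dyadic_selfSimilar hbound hF1
      fun i _ ht => measureReal_inter_Iic_of_mem_dyadicInterval hBm hB (hbranch i) ht)
end

section
/- For Lebesgue-almost all x = ⟨n_1, n_2, n_3, ...⟩ ∈ (0,1], the geometric mean of the digits converges to Somos' constant: lim_{i→∞} (n_1 n_2 ⋯ n_i)^{1/i} = σ, where σ = Π_{i=1}^∞ i^{1/2^i}. -/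
/-!
Let `d x = n₁` be the first digit of `x = ⟨n₁, n₂, …⟩` and `T x = 2 ^ n₁ * x - 1 = ⟨n₂, n₃, …⟩`
the shift. The branch `x ↦ 2 ^ n * x - 1` maps `{d = n}` affinely onto `(0, 1]`, so
`λ({d = n} ∩ T⁻¹ E) = 2⁻ⁿ λ(E)`: the map `T` preserves Lebesgue measure and `d` is independent of
`T`. Hence the digits `nₖ = d (T^[k-1] x)` are pairwise independent and identically distributed with
`P(nₖ = n) = 2⁻ⁿ`, and the strong law of large numbers applied to `log nₖ` gives
`(log n₁ + ⋯ + log nᵢ) / i → ∑ 2⁻ⁿ log n = log σ` almost surely.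
-/

open MeasureTheory Filter

/-- Somos' constant `σ = ∏_{i=1}^∞ i^{1/2^i}` (indexed from 0: factor `(i+1)^{1/2^{i+1}}`). -/
noncomputable def somos : ℝ := ∏' i : ℕ, ((i : ℝ) + 1) ^ (((2:ℝ) ^ (i + 1))⁻¹)

open ProbabilityTheory Topology Real Set Function

lemma ProbabilityTheory.IndepFun.comp_measurePreserving {Ω Ω' β γ : Type*} [MeasurableSpace Ω]
    [MeasurableSpace Ω'] [MeasurableSpace β] [MeasurableSpace γ] {μ : Measure Ω}
    {μ' : Measure Ω'} {f : Ω → β} {g : Ω → γ} {S : Ω' → Ω} (h : f ⟂ᵢ[μ] g)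
    (hS : MeasurePreserving S μ' μ) (hf : Measurable f) (hg : Measurable g) :
    (f ∘ S) ⟂ᵢ[μ'] (g ∘ S) := by
  rw [indepFun_iff_measure_inter_preimage_eq_mul] at h ⊢
  intro s t hs ht
  rw [preimage_comp, preimage_comp, ← preimage_inter,
    hS.measure_preimage ((hf hs).inter (hg ht)).nullMeasurableSet,
    hS.measure_preimage (hf hs).nullMeasurableSet, hS.measure_preimage (hg ht).nullMeasurableSet]
  exact h s t hs ht

namespace MeasureTheory.MeasurePreserving

variable {Ω β : Type*} [MeasurableSpace Ω] [MeasurableSpace β] {μ : Measure Ω} {T : Ω → Ω}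

lemma identDistrib_comp_iterate (hT : MeasurePreserving T μ μ) {f : Ω → β} (hf : Measurable f)
    (k : ℕ) : IdentDistrib (f ∘ T^[k]) f μ μ where
  aemeasurable_fst := (hf.comp (hT.measurable.iterate k)).aemeasurable
  aemeasurable_snd := hf.aemeasurable
  map_eq := by rw [← Measure.map_map hf (hT.measurable.iterate k), (hT.iterate k).map_eq]

lemma indepFun_comp_iterate (hT : MeasurePreserving T μ μ) {f : Ω → β} (hf : Measurable f)
    (hfT : f ⟂ᵢ[μ] T) {i j : ℕ} (hij : i < j) : (f ∘ T^[i]) ⟂ᵢ[μ] (f ∘ T^[j]) := by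
  obtain ⟨k, rfl⟩ := Nat.exists_eq_add_of_lt hij
  have h : f ⟂ᵢ[μ] (f ∘ T^[k + 1]) := by
    rw [iterate_succ]
    exact hfT.comp measurable_id (hf.comp (hT.measurable.iterate k))
  rw [show i + k + 1 = (k + 1) + i by omega, iterate_add, ← comp_assoc]
  exact h.comp_measurePreserving (hT.iterate i) hf (hf.comp (hT.measurable.iterate _))

theorem ae_tendsto_average_comp_iterate [IsProbabilityMeasure μ] (hT : MeasurePreserving T μ μ)
    {f : Ω → ℝ} (hf : Measurable f) (hint : Integrable f μ) (hfT : f ⟂ᵢ[μ] T) :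
    ∀ᵐ ω ∂μ, Tendsto (fun n : ℕ => (∑ k ∈ Finset.range n, f (T^[k] ω)) / n) atTop
      (𝓝 (∫ ω, f ω ∂μ)) := by
  have hindep : Pairwise fun i j => (f ∘ T^[i]) ⟂ᵢ[μ] (f ∘ T^[j]) := by
    intro i j hij
    rcases hij.lt_or_gt with h | h
    · exact hT.indepFun_comp_iterate hf hfT h
    · exact (hT.indepFun_comp_iterate hf hfT h).symm
  exact strong_law_ae_real (fun k => f ∘ T^[k]) hint hindep (hT.identDistrib_comp_iterate hf)

end MeasureTheory.MeasurePreserving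

lemma prod_range_rpow_inv_eq_exp_sum_log_div {a : ℕ → ℝ} (ha : ∀ k, 0 < a k) (n : ℕ) :
    (∏ k ∈ Finset.range n, a k) ^ (n : ℝ)⁻¹ = exp ((∑ k ∈ Finset.range n, log (a k)) / n) := by
  rw [rpow_def_of_pos (Finset.prod_pos fun k _ => ha k), log_prod fun k _ => (ha k).ne',
    div_eq_mul_inv]

instance : MeasurableSpace ℕ+ := ⊤

namespace DyadicDigits

noncomputable def firstDigit (x : ℝ) : ℕ+ := ⌊logb 2 x⁻¹⌋₊.succPNat

noncomputable def shift (x : ℝ) : ℝ := 2 ^ (firstDigit x : ℕ) * x - 1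

-- the interval `(2⁻ⁿ, 2¹⁻ⁿ]`
def digitInterval (n : ℕ+) : Set ℝ := (fun x => 2 ^ (n : ℕ) * x - 1) ⁻¹' Ioc 0 1

lemma digitInterval_subset (n : ℕ+) : digitInterval n ⊆ Ioc 0 1 := by
  intro x ⟨hx₀, hx₁⟩
  have h2n : (2 : ℝ) ≤ 2 ^ (n : ℕ) := le_self_pow₀ one_le_two n.ne_zero
  constructor <;> nlinarith

lemma firstDigit_eq_iff {x : ℝ} (hx : x ∈ Ioc 0 1) {n : ℕ+} :
    firstDigit x = n ↔ x ∈ digitInterval n := by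
  obtain ⟨m, rfl⟩ : ∃ m : ℕ, m.succPNat = n := ⟨n.natPred, n.succPNat_natPred⟩
  have hx' : 0 < x⁻¹ := inv_pos.2 hx.1
  have hy : 0 ≤ logb 2 x⁻¹ := logb_nonneg one_lt_two (one_le_inv_iff₀.2 hx)
  rw [firstDigit, Nat.succPNat_inj, Nat.floor_eq_iff hy, le_logb_iff_rpow_le one_lt_two hx',
    logb_lt_iff_lt_rpow one_lt_two hx', ← Nat.cast_succ, rpow_natCast, rpow_natCast,
    inv_lt_iff_one_lt_mul₀ hx.1, inv_eq_one_div, le_div_iff₀ hx.1]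
  simp only [digitInterval, mem_preimage, mem_Ioc, Nat.succPNat_coe, pow_succ]
  constructor <;> rintro ⟨h₁, h₂⟩ <;> constructor <;> linarith

lemma mem_digitInterval_firstDigit {x : ℝ} (hx : x ∈ Ioc 0 1) :
    x ∈ digitInterval (firstDigit x) :=
  (firstDigit_eq_iff hx).1 rfl

lemma firstDigit_eq_of_mem {x : ℝ} {n : ℕ+} (hx : x ∈ digitInterval n) : firstDigit x = n :=
  (firstDigit_eq_iff (digitInterval_subset n hx)).2 hx

lemma shift_eq_of_mem {x : ℝ} {n : ℕ+} (hx : x ∈ digitInterval n) :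
    shift x = 2 ^ (n : ℕ) * x - 1 := by
  rw [shift, firstDigit_eq_of_mem hx]

lemma measurableSet_digitInterval (n : ℕ+) : MeasurableSet (digitInterval n) :=
  measurableSet_Ioc.preimage (by fun_prop)

lemma pairwise_disjoint_digitInterval : Pairwise (Disjoint on digitInterval) := by
  intro m n hmn
  refine Set.disjoint_left.2 fun x hm hn => hmn ?_
  rw [← firstDigit_eq_of_mem hm, firstDigit_eq_of_mem hn]

lemma measurable_firstDigit : Measurable firstDigit :=
  measurable_from_top.comp
    (Nat.measurable_floor.comp ((measurable_log.comp measurable_inv).div_const _))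

lemma measurable_shift : Measurable shift :=
  (((measurable_from_top (f := fun n : ℕ+ => (2 : ℝ) ^ (n : ℕ))).comp
    measurable_firstDigit).mul measurable_id).sub_const 1

local notation "μ₀" => volume.restrict (Ioc (0 : ℝ) 1)

instance : IsProbabilityMeasure μ₀ := ⟨by simp⟩

lemma volume_digitInterval_inter_shift_preimage (n : ℕ+) (E : Set ℝ) :
    volume (digitInterval n ∩ shift ⁻¹' E) = ENNReal.ofReal ((2 : ℝ) ^ (n : ℕ))⁻¹ * μ₀ E := by
  have h : digitInterval n ∩ shift ⁻¹' E =
      (2 ^ (n : ℕ) * ·) ⁻¹' ((· + -1) ⁻¹' (E ∩ Ioc 0 1)) := by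
    ext x
    simp only [mem_inter_iff, mem_preimage, ← sub_eq_add_neg]
    constructor
    · rintro ⟨hx, hE⟩
      exact ⟨shift_eq_of_mem hx ▸ hE, hx⟩
    · rintro ⟨hE, hx⟩
      exact ⟨hx, (shift_eq_of_mem hx).symm ▸ hE⟩
  rw [h, Real.volume_preimage_mul_left (by positivity), measure_preimage_add_right,
    Measure.restrict_apply' measurableSet_Ioc, abs_of_pos (by positivity)]

lemma measure_firstDigit_preimage_inter_shift_preimage (s : Set ℕ+) {E : Set ℝ}
    (hE : MeasurableSet E) :
    μ₀ (firstDigit ⁻¹' s ∩ shift ⁻¹' E) =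
      (∑' n : s, ENNReal.ofReal ((2 : ℝ) ^ (n : ℕ))⁻¹) * μ₀ E := by
  have h : firstDigit ⁻¹' s ∩ shift ⁻¹' E ∩ Ioc 0 1 = ⋃ n : s, digitInterval n ∩ shift ⁻¹' E := by
    ext x
    simp only [mem_inter_iff, mem_preimage, mem_iUnion]
    constructor
    · rintro ⟨⟨hs, hE⟩, hx⟩
      exact ⟨⟨_, hs⟩, mem_digitInterval_firstDigit hx, hE⟩
    · rintro ⟨n, hn, hE⟩
      exact ⟨⟨firstDigit_eq_of_mem hn ▸ n.2, hE⟩, digitInterval_subset n hn⟩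
  rw [Measure.restrict_apply' measurableSet_Ioc, h, ← ENNReal.tsum_mul_right,
    measure_iUnion (fun m n hmn => (pairwise_disjoint_digitInterval (Subtype.coe_ne_coe.2 hmn)).mono
      inter_subset_left inter_subset_left) fun n =>
      (measurableSet_digitInterval n).inter (measurable_shift hE)]
  simp only [volume_digitInterval_inter_shift_preimage]

lemma measure_firstDigit_preimage (s : Set ℕ+) :
    μ₀ (firstDigit ⁻¹' s) = ∑' n : s, ENNReal.ofReal ((2 : ℝ) ^ (n : ℕ))⁻¹ := by
  simpa using measure_firstDigit_preimage_inter_shift_preimage s MeasurableSet.univ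

lemma measurePreserving_shift : MeasurePreserving shift μ₀ μ₀ := by
  have h {E : Set ℝ} (hE : MeasurableSet E) :=
    measure_firstDigit_preimage_inter_shift_preimage (univ : Set ℕ+) hE
  -- `E = univ` shows that the weights `2⁻ⁿ` sum to `1`
  have hw : ∑' n : (univ : Set ℕ+), ENNReal.ofReal ((2 : ℝ) ^ (n : ℕ))⁻¹ = 1 := by
    simpa using (h MeasurableSet.univ).symm
  refine ⟨measurable_shift, Measure.ext fun E hE => ?_⟩
  rw [Measure.map_apply measurable_shift hE, ← univ_inter (shift ⁻¹' E), ← preimage_univ,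
    h hE, hw, one_mul]

lemma indepFun_firstDigit_shift : firstDigit ⟂ᵢ[μ₀] shift := by
  rw [indepFun_iff_measure_inter_preimage_eq_mul]
  intro s E _ hE
  rw [measure_firstDigit_preimage_inter_shift_preimage s hE, measure_firstDigit_preimage,
    measurePreserving_shift.measure_preimage hE.nullMeasurableSet]

lemma map_firstDigit : Measure.map firstDigit μ₀ =
    Measure.sum fun n : ℕ+ => ENNReal.ofReal ((2 : ℝ) ^ (n : ℕ))⁻¹ • .dirac n := by
  conv_lhs => rw [← Measure.sum_smul_dirac (Measure.map firstDigit μ₀)]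
  congr! with n
  rw [Measure.map_apply measurable_firstDigit (measurableSet_singleton n),
    measure_firstDigit_preimage,
    tsum_singleton n fun n : ℕ+ => ENNReal.ofReal ((2 : ℝ) ^ (n : ℕ))⁻¹]

lemma summable_inv_two_pow_mul_log : Summable fun n : ℕ => ((2 : ℝ) ^ n)⁻¹ * log n := by
  refine .of_nonneg_of_le (fun n => by positivity) (fun n => ?_)
    (summable_pow_mul_geometric_of_norm_lt_one 1 (r := (2 : ℝ)⁻¹) (by norm_num))
  rw [inv_pow, pow_one, mul_comm]
  gcongr
  exact log_le_self n.cast_nonneg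

lemma summable_pnat_inv_two_pow_mul_log :
    Summable fun n : ℕ+ => ((2 : ℝ) ^ (n : ℕ))⁻¹ * log (n : ℕ) :=
  summable_pnat_iff_summable_nat.2 summable_inv_two_pow_mul_log

lemma measurable_log_pnat : Measurable fun n : ℕ+ => log (n : ℕ) := measurable_from_top

lemma measurable_log_firstDigit : Measurable fun x => log (firstDigit x : ℕ) :=
  measurable_log_pnat.comp measurable_firstDigit

lemma integrable_log_firstDigit : Integrable (fun x => log (firstDigit x : ℕ)) μ₀ := by
  refine (integrable_map_measure measurable_log_pnat.aestronglyMeasurable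
    measurable_firstDigit.aemeasurable).1 ?_
  rw [map_firstDigit]
  refine integrable_sum_dirac (fun _ => ENNReal.ofReal_ne_top) ?_
  simpa [Real.norm_of_nonneg (log_natCast_nonneg _)] using summable_pnat_inv_two_pow_mul_log

lemma integral_log_firstDigit :
    ∫ x, log (firstDigit x : ℕ) ∂μ₀ = ∑' n : ℕ+, ((2 : ℝ) ^ (n : ℕ))⁻¹ * log (n : ℕ) := by
  rw [← integral_map measurable_firstDigit.aemeasurable measurable_log_pnat.aestronglyMeasurable,
    map_firstDigit, integral_sum_dirac_eq_tsum (fun _ => ENNReal.ofReal_ne_top)]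
  · simp
  · simpa [Real.norm_of_nonneg (log_natCast_nonneg _)] using summable_pnat_inv_two_pow_mul_log

lemma somos_eq_exp : somos = exp (∑' n : ℕ+, ((2 : ℝ) ^ (n : ℕ))⁻¹ * log (n : ℕ)) := by
  rw [somos, ← summable_pnat_inv_two_pow_mul_log.hasSum.rexp.tprod_eq, comp_def,
    tprod_pnat_eq_tprod_succ (f := fun n : ℕ => exp (((2 : ℝ) ^ n)⁻¹ * log n))]
  congr with i
  rw [rpow_def_of_pos (by positivity), mul_comm]
  push_cast
  rfl

lemma hasSum_inv_two_pow_succ : HasSum (fun k : ℕ => (2⁻¹ : ℝ) ^ (k + 1)) 1 := by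
  simpa [pow_succ, div_eq_mul_inv, mul_comm] using hasSum_geometric_two' 1

lemma inv_two_pow_sum_pnat_le (n : ℕ → ℕ+) (k : ℕ) :
    (2⁻¹ : ℝ) ^ (∑ j ∈ Finset.range k, (n j : ℕ)) ≤ 2⁻¹ ^ k := by
  refine pow_le_pow_of_le_one (by norm_num) (by norm_num) ?_
  simpa using Finset.card_nsmul_le_sum (Finset.range k) (fun j => (n j : ℕ)) 1 fun j _ => (n j).pos

lemma summable_repVal (n : ℕ → ℕ+) :
    Summable fun k : ℕ => (2⁻¹ : ℝ) ^ (∑ j ∈ Finset.range (k + 1), (n j : ℕ)) :=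
  .of_nonneg_of_le (fun k => by positivity) (fun k => inv_two_pow_sum_pnat_le n (k + 1))
    hasSum_inv_two_pow_succ.summable

lemma repVal_mem_Ioc (n : ℕ → ℕ+) : repVal n ∈ Ioc 0 1 :=
  ⟨(summable_repVal n).tsum_pos (fun _ => by positivity) 0 (by positivity),
    ((summable_repVal n).tsum_le_tsum (fun k => inv_two_pow_sum_pnat_le n (k + 1))
      hasSum_inv_two_pow_succ.summable).trans_eq hasSum_inv_two_pow_succ.tsum_eq⟩

lemma two_pow_mul_repVal_sub_one (n : ℕ → ℕ+) :
    2 ^ (n 0 : ℕ) * repVal n - 1 = repVal fun k => n (k + 1) := by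
  have h2 : (2 : ℝ) ^ (n 0 : ℕ) * 2⁻¹ ^ (n 0 : ℕ) = 1 := by rw [← mul_pow]; norm_num
  have hk (k : ℕ) : (2 : ℝ) ^ (n 0 : ℕ) * 2⁻¹ ^ (∑ j ∈ Finset.range (k + 1 + 1), (n j : ℕ)) =
      2⁻¹ ^ (∑ j ∈ Finset.range (k + 1), (n (j + 1) : ℕ)) := by
    rw [Finset.sum_range_succ', pow_add, mul_left_comm, h2, mul_one]
  rw [repVal, (summable_repVal n).tsum_eq_zero_add, mul_add, ← tsum_mul_left, repVal,
    tsum_congr hk, zero_add, Finset.sum_range_one, h2]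
  ring

lemma repVal_mem_digitInterval (n : ℕ → ℕ+) : repVal n ∈ digitInterval (n 0) := by
  simpa only [digitInterval, mem_preimage, two_pow_mul_repVal_sub_one] using
    repVal_mem_Ioc fun k => n (k + 1)

lemma shift_repVal (n : ℕ → ℕ+) : shift (repVal n) = repVal fun k => n (k + 1) := by
  rw [shift_eq_of_mem (repVal_mem_digitInterval n), two_pow_mul_repVal_sub_one]

lemma firstDigit_iterate_shift_repVal (k : ℕ) (n : ℕ → ℕ+) :
    firstDigit (shift^[k] (repVal n)) = n k := by
  induction k generalizing n with
  | zero => exact firstDigit_eq_of_mem (repVal_mem_digitInterval n)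
  | succ k ih => rw [iterate_succ_apply, shift_repVal, ih]

end DyadicDigits

open DyadicDigits

/-- For almost all `x = ⟨n₁,n₂,…⟩ ∈ (0,1]`, the geometric mean of the digits tends to
Somos' constant. -/
theorem somos_universal :
    ∀ᵐ x ∂(volume.restrict (Set.Ioc (0:ℝ) 1)),
      ∀ n : ℕ → ℕ+, x = repVal n →
        Tendsto (fun i : ℕ => (∏ k ∈ Finset.range i, ((n k : ℕ) : ℝ)) ^ ((i : ℝ)⁻¹))
          atTop (nhds somos) := by
  have hslln := measurePreserving_shift.ae_tendsto_average_comp_iterate measurable_log_firstDigit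
    integrable_log_firstDigit (indepFun_firstDigit_shift.comp measurable_log_pnat measurable_id)
  filter_upwards [hslln] with x hx n rfl
  rw [integral_log_firstDigit] at hx
  rw [somos_eq_exp]
  refine ((continuous_exp.tendsto _).comp hx).congr fun i => ?_
  simp only [comp_apply, firstDigit_iterate_shift_repVal]
  exact (prod_range_rpow_inv_eq_exp_sum_log_div (fun k => Nat.cast_pos.2 (n k).pos) i).symm
end
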